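/- Let r ≥ 1 and let λ be a partition with an empty r-core, with at most k positive parts. Define inv_r^(k)(λ) as the number of pairs i < j with a_i > a_j in the row-color sequence a^(k)(λ), and sign_r^(k)(λ) = (−1)^{inv_r^(k)(λ) − inv_r^(k)(∅)}. Then sign_r^(k)(λ) is independent of the choice of k (as long as k is at least the number of positive parts of λ). -/

import Mathlib

/-- Boundary sequence of a partition (list of parts, weakly decreasing,
zero parts allowed and give leading `false`s): walk along the SE boundary
from SW corner to NE corner, `true` = east step, `false` = north step. -/
def bseq : List ℕ → List Bool
  | [] => []
  | a :: s => bseq s ++ List.replicate (a - s.headI) true ++ [false]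

/-- A partition: weakly decreasing list of positive integers. -/
def IsPartition (l : List ℕ) : Prop := l.Pairwise (· ≥ ·) ∧ ∀ x ∈ l, 0 < x

/-- The set of cells of the Young diagram (English convention, 0-indexed):
cell `(i, j)` is present iff `j < l_i`. -/
def cellSet (l : List ℕ) : Set (ℕ × ℕ) := {p | p.2 < l.getD p.1 0}

/-- Two cells are adjacent if they share an edge. -/
def CellAdj (p q : ℕ × ℕ) : Prop :=
  (p.1 = q.1 ∧ (p.2 + 1 = q.2 ∨ q.2 + 1 = p.2)) ∨
  (p.2 = q.2 ∧ (p.1 + 1 = q.1 ∨ q.1 + 1 = p.1))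

/-- A set of cells is connected (via edge-adjacency within the set). -/
def ConnSet (S : Set (ℕ × ℕ)) : Prop :=
  ∀ p ∈ S, ∀ q ∈ S, Relation.ReflTransGen (fun a b => b ∈ S ∧ CellAdj a b) p q

/-- A ribbon (border strip) of length `m`: a connected set of `m` cells
containing no 2×2 square. -/
 def IsRibbonSet (S : Set (ℕ × ℕ)) (m : ℕ) : Prop :=
  S.ncard = m ∧ ConnSet S ∧
  ∀ i j : ℕ, ¬((i, j) ∈ S ∧ (i + 1, j) ∈ S ∧ (i, j + 1) ∈ S ∧ (i + 1, j + 1) ∈ S)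

/-- `l'` is obtained from `l` by peeling a ribbon of length `m`. -/
def PeelRibbon (m : ℕ) (l l' : List ℕ) : Prop :=
  IsPartition l' ∧ cellSet l' ⊂ cellSet l ∧ IsRibbonSet (cellSet l \ cellSet l') m

/-- `l` has an empty `r`-core: it can be reduced to the empty partition by
successively peeling ribbons of length `r`. -/
def EmptyCore (r : ℕ) (l : List ℕ) : Prop :=
  Relation.ReflTransGen (fun x y => PeelRibbon r x y) l []

/-- The row-color sequence `a^(k)(λ)`: `a_i = (ℓ_i + k - i) mod r` (1-indexed),
here 0-indexed as `(l_i + k - i - 1) % r`. -/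
def rcs (r k : ℕ) (l : List ℕ) : List ℕ :=
  (List.range k).map (fun i => (l.getD i 0 + k - i - 1) % r)

/-- Inversion number of a word over a linearly ordered alphabet. -/
def invOn {α : Type*} [LinearOrder α] (w : List α) : ℕ :=
  (w.tails.map (fun t => match t with
    | [] => 0
    | a :: s => (s.filter (fun b => decide (b < a))).length)).sum

/-- `m_i` for a 0/1 (false/true) sequence: the number of `true`s among the
first `i` entries minus the number of `false`s among the remaining entries. -/
def mval (δ : List Bool) (i : ℕ) : ℤ :=
  ((δ.take i).count true : ℤ) - ((δ.drop i).count false : ℤ)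

/-- The anchor of a 0/1 sequence is at position `i` (between indices `i` and
`i+1`) iff the number of `true`s before it equals the number of `false`s after it. -/
def AnchorAt (δ : List Bool) (i : ℕ) : Prop :=
  (δ.take i).count true = (δ.drop i).count false

/-- The graph of the map `φ_r`: `IsPhi r Λ l` says that `l = φ_r (Λ 0, …, Λ (r-1))`,
i.e. the boundary sequences of the `Λ j` can be padded with leading `false`s and
trailing `true`s to a common length `t` and a common anchor position `i₀`, and the
interlaced sequence is a padding of the boundary sequence of `l`. -/
def IsPhi (r : ℕ) (Λ : ℕ → List ℕ) (l : List ℕ) : Prop :=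
  ∃ (t i₀ : ℕ) (s : ℕ → List Bool) (p q : ℕ → ℕ),
    (∀ j < r,
      s j = List.replicate (p j) false ++ bseq (Λ j) ++ List.replicate (q j) true ∧
      (s j).length = t ∧ AnchorAt (s j) i₀) ∧
    ∃ P Q : ℕ,
      List.replicate P false ++ bseq l ++ List.replicate Q true =
        (List.range (r * t)).map (fun v => (s (v % r)).getD (v / r) false)

/-- The height of a ribbon: one less than its number of rows. -/
noncomputable def htOf (S : Set (ℕ × ℕ)) : ℕ := (Prod.fst '' S).ncard - 1


/-!
Passing from `k` to `k + 1` turns the row-colour word `w` into `σ w ++ [0]`, where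
`σ a = (a + 1) % r`. The shift `σ` reverses the order of exactly those pairs in which one letter,
and only one, is `r - 1`, so modulo 2 it changes the inversion number by `c * (k - c)`, `c` being
the number of letters `r - 1`; the appended `0` adds the number of nonzero letters of `σ w`. Both
corrections depend only on the multiset of letters of `w`, and for a partition with empty `r`-core
this multiset is that of `∅`: removing an `r`-ribbon from rows `i₀ … i₁` permutes the β-numbers
`ℓ_i + k - i` of these rows cyclically, except that the one of row `i₀` drops by `r`. So the
corrections cancel in the sign.
-/

section Inversions

variable {α : Type*} [LinearOrder α]

theorem invOn_cons (a : α) (s : List α) : invOn (a :: s) = s.countP (· < a) + invOn s := by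
  simp [invOn, List.countP_eq_length_filter]

theorem invOn_append_singleton (w : List α) (x : α) :
    invOn (w ++ [x]) = invOn w + w.countP (x < ·) := by
  induction w with
  | nil => simp [invOn_cons]
  | cons a s ih =>
    simp only [List.cons_append, invOn_cons, ih, List.countP_append, List.countP_cons]
    rcases lt_trichotomy x a with h | rfl | h
    · simp only [List.countP_nil, h, decide_true, ↓reduceIte, zero_add]
      omega
    · simp only [List.countP_nil, lt_self_iff_false, decide_false, Bool.false_eq_true,
        ↓reduceIte, add_zero]
      omega
    · simp only [List.countP_nil, not_lt_of_gt h, decide_false, Bool.false_eq_true,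
        ↓reduceIte, add_zero]
      omega

end Inversions

section ColorShift

variable {r : ℕ}

theorem countP_lt_pred_eq_length_sub_count {s : List ℕ} (hs : ∀ x ∈ s, x < r) :
    s.countP (· < r - 1) = s.length - s.count (r - 1) := by
  induction s with
  | nil => simp
  | cons x s ih =>
    have hx := hs x (by simp)
    have := ih fun y hy => hs y (by simp [hy])
    have := s.count_le_length (a := r - 1)
    rw [List.countP_cons, List.count_cons, List.length_cons]
    simp only [decide_eq_true_eq, beq_iff_eq]
    split_ifs <;> omega

theorem countP_map_succ_mod_lt_succ {a : ℕ} (ha : a < r - 1) {s : List ℕ}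
    (hs : ∀ x ∈ s, x < r) :
    (s.map (fun b => (b + 1) % r)).countP (· < a + 1) = s.countP (· < a) + s.count (r - 1) := by
  induction s with
  | nil => simp
  | cons x s ih =>
    have hx := hs x (by simp)
    have := ih fun y hy => hs y (by simp [hy])
    rw [List.map_cons, List.countP_cons, List.countP_cons, List.count_cons]
    by_cases h : x = r - 1
    · have hx0 : (x + 1) % r = 0 := by rw [h, Nat.sub_add_cancel (by omega), Nat.mod_self]
      simp only [hx0, decide_eq_true_eq, beq_iff_eq]
      split_ifs <;> omega
    · have hx1 : (x + 1) % r = x + 1 := Nat.mod_eq_of_lt (by omega)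
      simp only [hx1, decide_eq_true_eq, beq_iff_eq]
      split_ifs <;> omega

theorem invOn_map_succ_mod_modEq {w : List ℕ} (hw : ∀ x ∈ w, x < r) :
    invOn (w.map fun a => (a + 1) % r) ≡
      invOn w + w.count (r - 1) * (w.length - w.count (r - 1)) [MOD 2] := by
  induction w with
  | nil => rfl
  | cons a s ih =>
    have ha := hw a (by simp)
    have hs : ∀ x ∈ s, x < r := fun y hy => hw y (by simp [hy])
    have ih := ih hs
    have := s.count_le_length (a := r - 1)
    unfold Nat.ModEq at *
    rw [List.map_cons, invOn_cons, invOn_cons, List.count_cons, List.length_cons]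
    by_cases h : a = r - 1
    · have ha0 : (a + 1) % r = 0 := by rw [h, Nat.sub_add_cancel (by omega), Nat.mod_self]
      have h0 : (s.map fun a => (a + 1) % r).countP (· < 0) = 0 := by simp
      rw [ha0, h0, h, countP_lt_pred_eq_length_sub_count hs]
      simp only [BEq.rfl, if_true, Nat.add_sub_add_right, Nat.succ_mul]
      omega
    · have ha1 : (a + 1) % r = a + 1 := Nat.mod_eq_of_lt (by omega)
      rw [ha1, countP_map_succ_mod_lt_succ (by omega) hs]
      simp only [beq_iff_eq, h, if_false, Nat.add_zero]
      rw [show s.length + 1 - s.count (r - 1) = s.length - s.count (r - 1) + 1 by omega,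
        Nat.mul_succ]
      omega

theorem List.Perm.invOn_map_succ_mod_append_zero_modEq {w w₀ : List ℕ} (hp : w.Perm w₀)
    (hw : ∀ x ∈ w, x < r) :
    invOn (w.map (fun a => (a + 1) % r) ++ [0]) + invOn (w₀.map (fun a => (a + 1) % r) ++ [0]) ≡
      invOn w + invOn w₀ [MOD 2] := by
  have hw₀ : ∀ x ∈ w₀, x < r := fun x hx => hw x (hp.mem_iff.mpr hx)
  rw [invOn_append_singleton, invOn_append_singleton, ((hp.map _).countP_eq _)]
  have h := (invOn_map_succ_mod_modEq hw).add (invOn_map_succ_mod_modEq hw₀)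
  rw [← hp.count_eq, ← hp.length_eq] at h
  unfold Nat.ModEq at *
  omega

end ColorShift

section RowColors

variable {r k : ℕ} {l : List ℕ}

theorem rcs_succ (hk : l.length ≤ k) :
    rcs r (k + 1) l = (rcs r k l).map (fun a => (a + 1) % r) ++ [0] := by
  unfold rcs
  rw [List.range_succ, List.map_append, List.map_map, List.map_singleton,
    List.getD_eq_default _ _ hk]
  congr 1
  · refine List.map_congr_left fun i hi => ?_
    have hik : i < k := List.mem_range.mp hi
    simp only [Function.comp_apply, Nat.mod_add_mod]
    congr 1
    omega
  · simp

theorem lt_of_mem_rcs (hr : 0 < r) {x : ℕ} (hx : x ∈ rcs r k l) : x < r := by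
  obtain ⟨i, -, rfl⟩ := List.mem_map.mp hx
  exact Nat.mod_lt _ hr

end RowColors

theorem List.perm_map_range_of_rotate {α : Type*} {f g : ℕ → α} {a b k : ℕ} (hab : a ≤ b)
    (hbk : b < k) (hout : ∀ i, i < a ∨ b < i → g i = f i)
    (hshift : ∀ i, a ≤ i → i < b → g i = f (i + 1)) (hlast : g b = f a) :
    ((List.range k).map g).Perm ((List.range k).map f) := by
  obtain ⟨d, rfl⟩ := Nat.exists_eq_add_of_le hab
  obtain ⟨m, rfl⟩ := Nat.exists_eq_add_of_lt hbk
  have hsplit : List.range (a + d + m + 1) =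
      List.range' 0 a ++ List.range' a (d + 1) ++ List.range' (a + (d + 1)) m := by
    have h := @List.range'_append_1 0 a (d + 1 + m)
    rw [Nat.zero_add] at h
    rw [List.range_eq_range', List.append_assoc, List.range'_append_1, h]
    congr 1; omega
  have houter : ∀ s n, (∀ i ∈ List.range' s n, i < a ∨ a + d < i) →
      (List.range' s n).map g = (List.range' s n).map f :=
    fun s n h => List.map_congr_left fun i hi => hout i (h i hi)
  rw [hsplit, List.map_append, List.map_append, List.map_append, List.map_append,
    houter 0 a (fun i hi => by rw [List.mem_range'_1] at hi; omega),
    houter (a + (d + 1)) m (fun i hi => by rw [List.mem_range'_1] at hi; omega)]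
  refine ((List.Perm.refl _).append ?_).append (List.Perm.refl _)
  have hrot : (List.range' a d).map g = (List.range' (a + 1) d).map f := by
    rw [List.range'_eq_map_range, List.range'_eq_map_range, List.map_map, List.map_map]
    refine List.map_congr_left fun i hi => ?_
    have := List.mem_range.mp hi
    simp only [Function.comp_apply, hshift (a + i) (by omega) (by omega)]
    congr 1; omega
  conv_lhs => rw [List.range'_1_concat, List.map_append, hrot, List.map_singleton, hlast]
  rw [List.range'_succ, List.map_cons]
  exact List.perm_append_singleton _ _

theorem Finset.sum_Ico_sub_eq_of_chain {a b : ℕ → ℤ} {i₀ i₁ : ℕ} (h₀₁ : i₀ ≤ i₁)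
    (h : ∀ i, i₀ ≤ i → i < i₁ → b i + 1 = a (i + 1)) :
    ∑ i ∈ Finset.Ico i₀ (i₁ + 1), (a i - b i) = a i₀ - b i₁ + (i₁ - i₀ : ℕ) := by
  induction i₁, h₀₁ using Nat.le_induction with
  | base => simp
  | succ n hn ih =>
    rw [Finset.sum_Ico_succ_top (by omega), ih fun i h₁ h₂ => h i h₁ (by omega),
      ← h n hn (by omega)]
    push_cast [Nat.sub_add_comm hn]
    ring

section YoungDiagram

variable {l l' : List ℕ}

theorem lt_length_of_getD_pos {i : ℕ} (h : 0 < l.getD i 0) : i < l.length := by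
  by_contra hi
  rw [List.getD_eq_default _ _ (not_lt.mp hi)] at h
  exact h.false

theorem IsPartition.getD_antitone (hl : IsPartition l) : Antitone (fun i => l.getD i 0) := by
  intro i j hij
  dsimp only
  rcases lt_or_ge j l.length with hj | hj
  · rw [List.getD_eq_getElem _ _ hj, List.getD_eq_getElem _ _ (hij.trans_lt hj)]
    rcases hij.eq_or_lt with rfl | hlt
    · rfl
    · exact List.pairwise_iff_getElem.mp hl.1 i j _ hj hlt
  · rw [List.getD_eq_default _ _ hj]
    exact Nat.zero_le _

theorem IsPartition.length_le_of_getD_le (hl' : IsPartition l')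
    (h : ∀ i, l'.getD i 0 ≤ l.getD i 0) : l'.length ≤ l.length := by
  by_contra! hlen
  have hlast : l'.length - 1 < l'.length := by omega
  have hpos : 0 < l'.getD (l'.length - 1) 0 := by
    rw [List.getD_eq_getElem _ _ hlast]
    exact hl'.2 _ (List.getElem_mem _)
  have := lt_length_of_getD_pos (hpos.trans_le (h _))
  omega

theorem getD_le_getD_of_cellSet_subset (h : cellSet l' ⊆ cellSet l) (i : ℕ) :
    l'.getD i 0 ≤ l.getD i 0 := by
  by_contra! hi
  exact lt_irrefl (l.getD i 0) (h (show (i, l.getD i 0) ∈ cellSet l' from hi))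

theorem mk_mem_cellSet_diff {i j : ℕ} :
    (i, j) ∈ cellSet l \ cellSet l' ↔ l'.getD i 0 ≤ j ∧ j < l.getD i 0 := by
  simp only [Set.mem_sdiff, cellSet, Set.mem_ofPred_eq, not_lt]
  exact and_comm

theorem ncard_cellSet_diff (l l' : List ℕ) :
    (cellSet l \ cellSet l').ncard = ∑ i ∈ Finset.range l.length, (l.getD i 0 - l'.getD i 0) := by
  classical
  have hcells : cellSet l \ cellSet l' = ↑((Finset.range l.length).biUnion
      fun i => {i} ×ˢ Finset.Ico (l'.getD i 0) (l.getD i 0)) := by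
    ext ⟨i, j⟩
    simp only [mk_mem_cellSet_diff, Finset.coe_biUnion, Finset.coe_range, Set.mem_iUnion,
      Finset.coe_product, Finset.coe_singleton, Finset.coe_Ico, Set.mem_prod,
      Set.mem_singleton_iff, Set.mem_Ico, Set.mem_Iio, exists_prop]
    constructor
    · rintro ⟨h₁, h₂⟩
      exact ⟨i, lt_length_of_getD_pos (by omega), rfl, h₁, h₂⟩
    · rintro ⟨_, _, rfl, h⟩
      exact h
  rw [hcells, Set.ncard_coe_finset, Finset.card_biUnion]
  · simp
  · intro i _ i' _ hii'
    simp only [Function.onFun, Finset.disjoint_left, Finset.mem_product, Finset.mem_singleton]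
    rintro x ⟨rfl, -⟩ ⟨h, -⟩
    exact hii' h

theorem exists_vertical_adj_of_reflTransGen {S : Set (ℕ × ℕ)} {p q : ℕ × ℕ} (hp : p ∈ S)
    (h : Relation.ReflTransGen (fun a b => b ∈ S ∧ CellAdj a b) p q) {i : ℕ} (h₁ : p.1 ≤ i)
    (h₂ : i < q.1) : ∃ j, (i, j) ∈ S ∧ (i + 1, j) ∈ S := by
  induction h with
  | refl => omega
  | @tail b c hpb hbc ih =>
    rcases lt_or_ge i b.1 with hib | hib
    · exact ih hib
    have hbS : b ∈ S := by
      rcases hpb.cases_tail with rfl | ⟨_, _, hb⟩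
      exacts [hp, hb.1]
    obtain ⟨hcS, ⟨hrow, -⟩ | ⟨hcol, hc | hc⟩⟩ := hbc
    · omega
    · obtain rfl : i = b.1 := by omega
      refine ⟨b.2, hbS, ?_⟩
      rwa [show (b.1 + 1, b.2) = c from Prod.ext hc hcol]
    · omega

end YoungDiagram

section Ribbon

variable {r k : ℕ} {l l' : List ℕ}

theorem exists_rows_of_cellSet_ssubset (h : cellSet l' ⊂ cellSet l) :
    ∃ i₀ i₁, i₀ ≤ i₁ ∧ l'.getD i₀ 0 < l.getD i₀ 0 ∧ l'.getD i₁ 0 < l.getD i₁ 0 ∧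
      ∀ i, l'.getD i 0 < l.getD i 0 → i₀ ≤ i ∧ i ≤ i₁ := by
  classical
  set R := (Finset.range l.length).filter fun i => l'.getD i 0 < l.getD i 0
  have hR : ∀ i, i ∈ R ↔ l'.getD i 0 < l.getD i 0 := fun i => by
    simp only [R, Finset.mem_filter, Finset.mem_range, and_iff_right_iff_imp]
    exact fun hi => lt_length_of_getD_pos (by omega)
  have hne : R.Nonempty := by
    obtain ⟨⟨i, j⟩, hj, hj'⟩ := Set.exists_of_ssubset h
    exact ⟨i, (hR i).mpr (by simp only [cellSet, Set.mem_ofPred_eq] at hj hj'; omega)⟩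
  refine ⟨R.min' hne, R.max' hne, R.min'_le _ (R.max'_mem hne), (hR _).mp (R.min'_mem hne),
    (hR _).mp (R.max'_mem hne), fun i hi => ⟨R.min'_le _ ((hR i).mpr hi),
      R.le_max' _ ((hR i).mpr hi)⟩⟩

/-- Consecutive rows of a ribbon overlap in exactly one column. -/
theorem getD_add_one_eq_of_isRibbonSet (hl : IsPartition l) (hl' : IsPartition l')
    (hS : IsRibbonSet (cellSet l \ cellSet l') r) {i₀ i₁ : ℕ}
    (h₀ : l'.getD i₀ 0 < l.getD i₀ 0) (h₁ : l'.getD i₁ 0 < l.getD i₁ 0) {i : ℕ}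
    (hi₀ : i₀ ≤ i) (hi₁ : i < i₁) : l'.getD i 0 + 1 = l.getD (i + 1) 0 := by
  have hp : (i₀, l'.getD i₀ 0) ∈ cellSet l \ cellSet l' := mk_mem_cellSet_diff.mpr ⟨le_rfl, h₀⟩
  have hq : (i₁, l'.getD i₁ 0) ∈ cellSet l \ cellSet l' := mk_mem_cellSet_diff.mpr ⟨le_rfl, h₁⟩
  obtain ⟨j, hj, hj'⟩ := exists_vertical_adj_of_reflTransGen hp (hS.2.1 _ hp _ hq) hi₀ hi₁
  rw [mk_mem_cellSet_diff] at hj hj'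
  have hl_anti : l.getD (i + 1) 0 ≤ l.getD i 0 := hl.getD_antitone (Nat.le_succ i)
  have hl'_anti : l'.getD (i + 1) 0 ≤ l'.getD i 0 := hl'.getD_antitone (Nat.le_succ i)
  by_contra hne
  exact hS.2.2 i (l'.getD i 0) ⟨mk_mem_cellSet_diff.mpr (by omega),
    mk_mem_cellSet_diff.mpr (by omega), mk_mem_cellSet_diff.mpr (by omega),
    mk_mem_cellSet_diff.mpr (by omega)⟩

theorem PeelRibbon.exists_rows (hl : IsPartition l) (h : PeelRibbon r l l') :
    ∃ i₀ i₁, i₀ ≤ i₁ ∧ i₁ < l.length ∧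
      (∀ i, i < i₀ ∨ i₁ < i → l'.getD i 0 = l.getD i 0) ∧
      (∀ i, i₀ ≤ i → i < i₁ → l'.getD i 0 + 1 = l.getD (i + 1) 0) ∧
      l'.getD i₁ 0 + i₀ + r = l.getD i₀ 0 + i₁ := by
  obtain ⟨hl', hss, hS⟩ := h
  obtain ⟨i₀, i₁, h₀₁, h₀, h₁, hrows⟩ := exists_rows_of_cellSet_ssubset hss
  have hle := getD_le_getD_of_cellSet_subset hss.subset
  have hout : ∀ i, i < i₀ ∨ i₁ < i → l'.getD i 0 = l.getD i 0 := fun i hi => by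
    by_contra hne
    have := hrows i ((hle i).lt_of_ne hne)
    omega
  have hchain := fun i => getD_add_one_eq_of_isRibbonSet hl hl' hS h₀ h₁ (i := i)
  have hi₁ : i₁ < l.length := lt_length_of_getD_pos (by omega)
  refine ⟨i₀, i₁, h₀₁, hi₁, hout, hchain, ?_⟩
  have hsize : (r : ℤ) = ∑ i ∈ Finset.Ico i₀ (i₁ + 1), ((l.getD i 0 : ℤ) - l'.getD i 0) := by
    rw [← hS.1, ncard_cellSet_diff, ← Finset.sum_subset (s₁ := Finset.Ico i₀ (i₁ + 1))]
    · push_cast [Nat.cast_sub (hle _)]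
      rfl
    · intro i hi
      simp only [Finset.mem_Ico, Finset.mem_range] at hi ⊢
      omega
    · intro i _ hi
      rw [hout i (by simp only [Finset.mem_Ico] at hi; omega), Nat.sub_self]
  rw [Finset.sum_Ico_sub_eq_of_chain h₀₁ fun i h h' => by exact_mod_cast hchain i h h'] at hsize
  omega

/-- Removing an `r`-ribbon rotates the row colours of the rows it meets: the first such row's
colour moves to the last one. -/
theorem PeelRibbon.rcs_perm (hl : IsPartition l) (h : PeelRibbon r l l') (hk : l.length ≤ k) :
    (rcs r k l').Perm (rcs r k l) := by
  obtain ⟨i₀, i₁, h₀₁, hi₁, hout, hchain, hsize⟩ := h.exists_rows hl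
  refine List.perm_map_range_of_rotate h₀₁ (by omega) (fun i hi => by rw [hout i hi])
    (fun i h₀ h₁ => ?_) ?_
  · rw [← hchain i h₀ h₁]
    congr 1
    omega
  · rw [show l.getD i₀ 0 + k - i₀ - 1 = l'.getD i₁ 0 + k - i₁ - 1 + r by omega,
      Nat.add_mod_right]

theorem EmptyCore.rcs_perm (hcore : EmptyCore r l) (hl : IsPartition l) (hk : l.length ≤ k) :
    (rcs r k l).Perm (rcs r k []) := by
  induction hcore using Relation.ReflTransGen.head_induction_on with
  | refl => exact List.Perm.refl _
  | head hpeel _ ih =>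
    have hlen := hpeel.1.length_le_of_getD_le (getD_le_getD_of_cellSet_subset hpeel.2.1.subset)
    exact (hpeel.rcs_perm hl hk).symm.trans (ih hpeel.1 (hlen.trans hk))

end Ribbon

theorem sign_r_independent_of_k
    (r : ℕ) (hr : 1 ≤ r) (l : List ℕ) (hl : IsPartition l)
    (hcore : EmptyCore r l) (k k' : ℕ) (hk : l.length ≤ k) (hk' : l.length ≤ k') :
    (-1 : ℤ) ^ invOn (rcs r k l) * (-1 : ℤ) ^ invOn (rcs r k []) =
      (-1 : ℤ) ^ invOn (rcs r k' l) * (-1 : ℤ) ^ invOn (rcs r k' []) := by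
  have hstep : ∀ m, l.length ≤ m → invOn (rcs r (m + 1) l) + invOn (rcs r (m + 1) []) ≡
      invOn (rcs r m l) + invOn (rcs r m []) [MOD 2] := fun m hm => by
    rw [rcs_succ hm, rcs_succ (Nat.zero_le m)]
    exact (hcore.rcs_perm hl hm).invOn_map_succ_mod_append_zero_modEq fun _ => lt_of_mem_rcs hr
  have hconst : ∀ m, l.length ≤ m → invOn (rcs r m l) + invOn (rcs r m []) ≡
      invOn (rcs r l.length l) + invOn (rcs r l.length []) [MOD 2] := fun m hm => by
    induction m, hm using Nat.le_induction with
    | base => rfl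
    | succ m hm ih => exact (hstep m hm).trans ih
  rw [← pow_add, ← pow_add, neg_one_pow_eq_pow_mod_two, neg_one_pow_eq_pow_mod_two (_ + _)]
  exact congrArg _ ((hconst k hk).trans (hconst k' hk').symm)
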